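/- arXiv:2003.04356 — 2 statements merged into one kernel-verified Lean document; each statement's English description precedes it below -/
import Mathlib

section
/- The BPQM success probability for decoding bit 1 of the 5-bit code equals the Helstrom bound: P_succ = 1 − (p₀² − √(p₀⁴ − (2p₀−1)³))/2, where p₀ = (1 + cos²θ)/2. -/
open Real

/-!
With `p₀ = (1 + c²)/2` one has `2p₀ - 1 = c²`, and the discriminant factors as
`p₀⁴ - (2p₀ - 1)³ = p₀⁴ (1 - (4c³/(1 + c²)²)²) = p₀⁴ sin² φ₀₀^⊛`.
Since `sin φ₀₀^⊛ ≥ 0` on `[0, π]`, this gives `√(p₀⁴ - (2p₀ - 1)³) = p₀² sin φ₀₀^⊛`,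
and the two expressions for the success probability agree.
-/

lemma helstrom_discriminant_eq (c : ℝ) :
    ((1 + c ^ 2) / 2) ^ 4 - (2 * ((1 + c ^ 2) / 2) - 1) ^ 3
      = (((1 + c ^ 2) / 2) ^ 2) ^ 2 * (1 - (4 * c ^ 3 / (1 + c ^ 2) ^ 2) ^ 2) := by
  have hne : (1 + c ^ 2) ≠ 0 := by positivity
  field_simp
  ring

lemma sqrt_helstrom_discriminant_eq (c φ : ℝ) (hφ : φ ∈ Set.Icc 0 π)
    (hcos : cos φ = 4 * c ^ 3 / (1 + c ^ 2) ^ 2) :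
    √(((1 + c ^ 2) / 2) ^ 4 - (2 * ((1 + c ^ 2) / 2) - 1) ^ 3)
      = ((1 + c ^ 2) / 2) ^ 2 * sin φ := by
  rw [helstrom_discriminant_eq, ← hcos, sqrt_mul (sq_nonneg _), sqrt_sq (sq_nonneg _),
    ← sin_eq_sqrt_one_sub_cos_sq hφ.1 hφ.2]

theorem bpqm_bit1_success_general (θ φ : ℝ) (hφ : φ ∈ Set.Icc 0 π)
    (hconv : Real.cos φ = 4 * Real.cos θ ^ 3 / (1 + Real.cos θ ^ 2) ^ 2) :
    ∀ p₀ : ℝ, p₀ = (1 + Real.cos θ ^ 2) / 2 →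
    p₀ ^ 2 * ((1 + Real.sin φ) / 2) + (1 - p₀ ^ 2)
      = 1 - (p₀ ^ 2 - Real.sqrt (p₀ ^ 4 - (2 * p₀ - 1) ^ 3)) / 2 := by
  rintro p₀ rfl
  rw [sqrt_helstrom_discriminant_eq (cos θ) φ hφ hconv]
  ring

/-- BPQM success probability for decoding bit 1 of the 5-bit code equals the
Helstrom bound: with `c = cos θ`, `p₀ = (1 + c²)/2`, and the angle
`φ₀₀^⊛ ∈ [0, π]` given by `cos φ₀₀^⊛ = 4c³/(1+c²)²`, the X-basis measurement on
`Ψ± = p₀²|±φ₀₀^⊛⟩⟨±φ₀₀^⊛| + (1-p₀²)|±⟩⟨±|` succeeds with probability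
`p₀²(1 + sin φ₀₀^⊛)/2 + (1 - p₀²) = 1 - (p₀² - √(p₀⁴ - (2p₀-1)³))/2`. -/
theorem bpqm_bit1_success (θ φ : ℝ) (hθ : θ ∈ Set.Ioo 0 (π / 2)) (hφ : φ ∈ Set.Icc 0 π)
    (hconv : Real.cos φ = 4 * Real.cos θ ^ 3 / (1 + Real.cos θ ^ 2) ^ 2) :
    ∀ p₀ : ℝ, p₀ = (1 + Real.cos θ ^ 2) / 2 →
    p₀ ^ 2 * ((1 + Real.sin φ) / 2) + (1 - p₀ ^ 2)
      = 1 - (p₀ ^ 2 - Real.sqrt (p₀ ^ 4 - (2 * p₀ - 1) ^ 3)) / 2 :=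
  bpqm_bit1_success_general θ φ hφ hconv
end

section
/- For the single-qubit mixtures Ψ± = p₀²|±φ⟩⟨±φ| + (1−p₀²)|±⟩⟨±| with p₀ ∈ [0,1] and φ ∈ [0, π/2], the trace distance is ‖Ψ₊ − Ψ₋‖₁ = 2(1 − p₀²(1 − sin φ)), and the X-basis measurement achieves the corresponding Helstrom success probability. -/
open Matrix Real ComplexOrder

/-- The qubit state `|φ⟩ = cos(φ/2)|0⟩ + sin(φ/2)|1⟩`; note `|±⟩ = |±(π/2)⟩`. -/
noncomputable def ket (φ : ℝ) : Fin 2 → ℂ :=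
  ![(Real.cos (φ / 2) : ℂ), (Real.sin (φ / 2) : ℂ)]

/-- The outer product `|v⟩⟨v|`. -/
def outer {n : Type*} (v : n → ℂ) : Matrix n n ℂ :=
  Matrix.of fun i j => v i * star (v j)

/-- The square root of a positive semidefinite matrix (Mathlib's former `Matrix.PosSemidef.sqrt`). -/
noncomputable def psdSqrt {n : Type*} [Fintype n] [DecidableEq n] {A : Matrix n n ℂ}
    (hA : A.PosSemidef) : Matrix n n ℂ :=
  hA.1.eigenvectorUnitary.1 * diagonal ((↑) ∘ (√·) ∘ hA.1.eigenvalues) *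
    (star hA.1.eigenvectorUnitary : Matrix n n ℂ)

/-- The trace norm `‖M‖₁ = Tr √(MᴴM)`. -/
noncomputable def traceNorm {n : Type*} [Fintype n] [DecidableEq n]
    (M : Matrix n n ℂ) : ℝ :=
  ((psdSqrt (Matrix.posSemidef_conjTranspose_mul_self M)).trace).re

/-- The mixture `Ψ± = p₀²|±φ⟩⟨±φ| + (1-p₀²)|±⟩⟨±|`. -/
noncomputable def Psi (p₀ φ : ℝ) (s : Bool) : Matrix (Fin 2) (Fin 2) ℂ :=
  ((p₀ ^ 2 : ℝ) : ℂ) • outer (ket (if s then φ else -φ)) +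
    ((1 - p₀ ^ 2 : ℝ) : ℂ) • outer (ket (if s then π / 2 else -(π / 2)))

/-!
The difference `Ψ₊ - Ψ₋` is a real multiple of the unitary Pauli matrix `σₓ`, because
`|θ⟩⟨θ| - |-θ⟩⟨-θ| = sin θ • σₓ`; with `sin (π/2) = 1` the coefficient is
`1 - p₀²(1 - sin φ)`, which is nonnegative on the given ranges. The trace norm of `a • U` for
unitary `U` is `|a| · dim`, since `√((a • U)ᴴ (a • U)) = |a| • 1`. The success probability of the
`X` measurement comes from `|⟨ψ|θ⟩|² = cos²((θ - ψ)/2) = (1 + cos (θ - ψ))/2`.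
-/

section TraceNorm

variable {n : Type*} [Fintype n] [DecidableEq n]

lemma psdSqrt_eq_cfc_sqrt {A : Matrix n n ℂ} (hA : A.PosSemidef) :
    psdSqrt hA = cfc Real.sqrt A := by
  rw [hA.1.cfc_eq]
  rfl

lemma traceNorm_eq_re_trace_cfc_sqrt (M : Matrix n n ℂ) :
    traceNorm M = (cfc Real.sqrt (Mᴴ * M)).trace.re := by
  rw [traceNorm, psdSqrt_eq_cfc_sqrt]

lemma traceNorm_smul_of_mem_unitary {U : Matrix n n ℂ} (hU : U ∈ unitary (Matrix n n ℂ))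
    (a : ℂ) : traceNorm (a • U) = ‖a‖ * Fintype.card n := by
  have hsq : (a • U)ᴴ * (a • U) = algebraMap ℝ (Matrix n n ℂ) (‖a‖ ^ 2) := by
    rw [conjTranspose_smul, smul_mul_smul_comm, ← star_eq_conjTranspose,
      Unitary.star_mul_self_of_mem hU, Algebra.algebraMap_eq_smul_one, RCLike.star_def,
      RCLike.conj_mul, ← Complex.coe_smul]
    norm_cast
  rw [traceNorm_eq_re_trace_cfc_sqrt, hsq, cfc_algebraMap, Real.sqrt_sq (norm_nonneg a),
    Algebra.algebraMap_eq_smul_one, trace_smul, trace_one]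
  simp

end TraceNorm

lemma outer_eq_vecMulVec {n : Type*} (v : n → ℂ) : outer v = vecMulVec v (star v) := rfl

lemma trace_outer_mul_outer {n : Type*} [Fintype n] (u v : n → ℂ) :
    (outer u * outer v).trace = (star u ⬝ᵥ v) * (star v ⬝ᵥ u) := by
  rw [outer_eq_vecMulVec, outer_eq_vecMulVec, vecMulVec_mul_vecMulVec, trace_vecMulVec,
    dotProduct_smul, smul_eq_mul, dotProduct_comm u]

lemma star_ket_dotProduct_ket (θ ψ : ℝ) :
    star (ket θ) ⬝ᵥ ket ψ = (Real.cos ((θ - ψ) / 2) : ℂ) := by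
  rw [sub_div, Real.cos_sub]
  simp [ket, dotProduct, Fin.sum_univ_two, -Complex.ofReal_cos, -Complex.ofReal_sin]

lemma trace_outer_ket_mul_outer_ket (θ ψ : ℝ) :
    (outer (ket θ) * outer (ket ψ)).trace = ((1 + Real.cos (θ - ψ)) / 2 : ℝ) := by
  have hcos : Real.cos ((θ - ψ) / 2) * Real.cos ((ψ - θ) / 2) = (1 + Real.cos (θ - ψ)) / 2 := by
    rw [show (ψ - θ) / 2 = -((θ - ψ) / 2) by ring, Real.cos_neg, ← sq, Real.cos_sq]
    ring_nf
  rw [trace_outer_mul_outer, star_ket_dotProduct_ket, star_ket_dotProduct_ket,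
    ← Complex.ofReal_mul, hcos]

def pauliX : Matrix (Fin 2) (Fin 2) ℂ := !![0, 1; 1, 0]

lemma pauliX_mem_unitary : pauliX ∈ unitary (Matrix (Fin 2) (Fin 2) ℂ) := by
  rw [Unitary.mem_iff, star_eq_conjTranspose, pauliX]
  constructor <;> ext i j <;> fin_cases i <;> fin_cases j <;> simp [mul_apply]

lemma outer_ket_sub_outer_ket_neg (θ : ℝ) :
    outer (ket θ) - outer (ket (-θ)) = (Real.sin θ : ℂ) • pauliX := by
  have hsin : Real.sin θ = 2 * Real.sin (θ / 2) * Real.cos (θ / 2) := by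
    rw [← Real.sin_two_mul]
    ring_nf
  ext i j
  fin_cases i <;> fin_cases j <;>
    simp [outer, ket, pauliX, neg_div, hsin, -Complex.ofReal_cos, -Complex.ofReal_sin] <;> ring

section Mixture

variable (p₀ φ : ℝ)

lemma Psi_true_sub_Psi_false :
    Psi p₀ φ true - Psi p₀ φ false = ((1 - p₀ ^ 2 * (1 - Real.sin φ) : ℝ) : ℂ) • pauliX := by
  have hsplit : Psi p₀ φ true - Psi p₀ φ false =
      ((p₀ ^ 2 : ℝ) : ℂ) • (outer (ket φ) - outer (ket (-φ))) +
        ((1 - p₀ ^ 2 : ℝ) : ℂ) • (outer (ket (π / 2)) - outer (ket (-(π / 2)))) := by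
    simp only [Psi, if_true, Bool.false_eq_true, if_false, smul_sub]
    abel
  rw [hsplit, outer_ket_sub_outer_ket_neg, outer_ket_sub_outer_ket_neg, Real.sin_pi_div_two,
    smul_smul, smul_smul, ← add_smul]
  push_cast
  ring_nf

lemma traceNorm_Psi_true_sub_Psi_false :
    traceNorm (Psi p₀ φ true - Psi p₀ φ false) = 2 * |1 - p₀ ^ 2 * (1 - Real.sin φ)| := by
  rw [Psi_true_sub_Psi_false, traceNorm_smul_of_mem_unitary pauliX_mem_unitary,
    Complex.norm_real, Real.norm_eq_abs, Fintype.card_fin]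
  push_cast
  ring

lemma re_trace_Psi_true_mul_outer_ket_pi_div_two :
    ((Psi p₀ φ true * outer (ket (π / 2))).trace).re
      = p₀ ^ 2 * ((1 + Real.sin φ) / 2) + (1 - p₀ ^ 2) := by
  simp only [Psi, if_true, add_mul, smul_mul_assoc, trace_add, trace_smul,
    trace_outer_ket_mul_outer_ket, Real.cos_sub_pi_div_two, sub_self, Real.cos_zero, smul_eq_mul]
  norm_cast
  ring

end Mixture

/-- For the single-qubit mixtures `Ψ±` with `p₀ ∈ [0,1]` and `φ ∈ [0, π/2]`:
`‖Ψ₊ - Ψ₋‖₁ = 2(1 - p₀²(1 - sin φ))`, and the X-basis measurement achieves the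
corresponding Helstrom success probability, i.e.
`Tr[Ψ₊|+⟩⟨+|] = p₀²(1 + sin φ)/2 + (1 - p₀²) = 1/2 + (1/4)‖Ψ₊ - Ψ₋‖₁`. -/
theorem mixture_helstrom (p₀ φ : ℝ) (hp : p₀ ∈ Set.Icc (0 : ℝ) 1)
    (hφ : φ ∈ Set.Icc 0 (π / 2)) :
    traceNorm (Psi p₀ φ true - Psi p₀ φ false)
      = 2 * (1 - p₀ ^ 2 * (1 - Real.sin φ)) ∧
    ((Psi p₀ φ true * outer (ket (π / 2))).trace).re
      = p₀ ^ 2 * ((1 + Real.sin φ) / 2) + (1 - p₀ ^ 2) ∧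
    ((Psi p₀ φ true * outer (ket (π / 2))).trace).re
      = 1 / 2 + (1 / 4) * traceNorm (Psi p₀ φ true - Psi p₀ φ false) := by
  have hsin : 0 ≤ Real.sin φ :=
    Real.sin_nonneg_of_nonneg_of_le_pi hφ.1 (by linarith [hφ.2, Real.pi_pos])
  have hcoeff : 0 ≤ 1 - p₀ ^ 2 * (1 - Real.sin φ) := by
    nlinarith [Real.sin_le_one φ, hp.1, hp.2]
  have hnorm : traceNorm (Psi p₀ φ true - Psi p₀ φ false)
      = 2 * (1 - p₀ ^ 2 * (1 - Real.sin φ)) := by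
    rw [traceNorm_Psi_true_sub_Psi_false, abs_of_nonneg hcoeff]
  have htrace := re_trace_Psi_true_mul_outer_ket_pi_div_two p₀ φ
  exact ⟨hnorm, htrace, by rw [htrace, hnorm]; ring⟩
end
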